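/- arXiv:2408.03225 — 2 statements merged into one kernel-verified Lean document; each statement's English description precedes it below -/
import Mathlib

section
/- With notation as above, if |∠(n_j, R_r v_k) − π/2| ≤ ε, then |∠(n_j, R_{r₀} v_k) − π/2| ≤ ε + μ, whenever ∠(R_r v_k, R_{r₀} v_k) ≤ μ. Consequently the relaxed count E_U(r₀) = Σ_j max_k ⟦|∠(n_j, R_{r₀} v_k) − π/2| ≤ ε + μ⟧ is an upper bound for the objective E(R_r) = Σ_j max_k ⟦|∠(n_j, R_r v_k) − π/2| ≤ ε⟧ for every r in the rotation cube of side δ_r centered at r₀, where μ = min(√3·δ_r/2, π). -/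
open Matrix

noncomputable def dot3 (u w : Fin 3 → ℝ) : ℝ := ∑ i, u i * w i

noncomputable def norm3 (u : Fin 3 → ℝ) : ℝ := Real.sqrt (dot3 u u)

/-- Angle between two vectors in ℝ³, in [0, π]. -/
noncomputable def vangle (u w : Fin 3 → ℝ) : ℝ :=
  Real.arccos (dot3 u w / (norm3 u * norm3 w))

/-- Cross-product (skew-symmetric) matrix of a vector. -/
def crossMat (b : Fin 3 → ℝ) : Matrix (Fin 3) (Fin 3) ℝ :=
  !![0, -b 2, b 1; b 2, 0, -b 0; -b 1, b 0, 0]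

/-- Rotation matrix of an axis-angle vector, via the matrix exponential. -/
noncomputable def axisAngleRot (a : Fin 3 → ℝ) : Matrix (Fin 3) (Fin 3) ℝ :=
  NormedSpace.exp (crossMat a)

/-- Inlier-counting objective: E(R) = Σ_j max_k ⟦|∠(n_j, R v_k) − π/2| ≤ ε⟧. -/
noncomputable def inlierCount {J K : ℕ} (n : Fin J → Fin 3 → ℝ) (v : Fin K → Fin 3 → ℝ)
    (R : Matrix (Fin 3) (Fin 3) ℝ) (ε : ℝ) : ℕ :=
  ∑ j, Finset.univ.sup fun k => if |vangle (n j) (R.mulVec (v k)) - Real.pi / 2| ≤ ε then 1 else 0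

/-! Part (i) is the triangle inequality for angles. For part (ii), `R_r = exp [r]ₓ` is the
exponential of a skew-adjoint operator, and for skew-adjoint `A`, `B` and a unit vector `x` one
has `∠(e^A x, e^B x) ≤ ‖A - B‖`: along `A_t = A + t (B - A)` the curve `e^{A_t} x` stays on the
unit sphere and is `‖B - A‖`-Lipschitz, and the endpoints of such a curve are at angle at most its
Lipschitz constant. As `‖[c]ₓ‖ ≤ |c|` and the cube of side `δ` has half-diagonal `√3 δ / 2`,
`∠(R_r v_k, R_{r₀} v_k) ≤ μ` on the cube, so every inlier for `r` is an inlier for `r₀` at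
threshold `ε + μ`. -/

open InnerProductGeometry Filter Topology NormedSpace WithLp

section SphereCurves

variable {V : Type*} [NormedAddCommGroup V] [InnerProductSpace ℝ V]

theorem abs_angle_sub_angle_le (x y z : V) : |angle x z - angle x y| ≤ angle y z := by
  have h₁ := angle_le_angle_add_angle x y z
  have h₂ := angle_le_angle_add_angle x z y
  rw [angle_comm z y] at h₂
  exact abs_le.2 ⟨by linarith, by linarith⟩

theorem angle_eq_two_mul_arcsin {u w : V} (hu : ‖u‖ = 1) (hw : ‖w‖ = 1) :
    angle u w = 2 * Real.arcsin (‖u - w‖ / 2) := by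
  have h₀ := angle_nonneg u w
  have hπ := angle_le_pi u w
  have hsin : Real.sin (angle u w / 2) = ‖u - w‖ / 2 := by
    have hcos := norm_sub_sq_eq_norm_sq_add_norm_sq_sub_two_mul_norm_mul_norm_mul_cos_angle u w
    rw [hu, hw] at hcos
    rw [Real.sin_half_eq_sqrt h₀ (by linarith [Real.pi_pos]),
      show (1 - Real.cos (angle u w)) / 2 = (‖u - w‖ / 2) ^ 2 by linarith,
      Real.sqrt_sq (by positivity)]
  rw [← hsin, Real.arcsin_sin (by linarith [Real.pi_pos]) (by linarith)]
  ring

theorem tendsto_nat_mul_two_mul_arcsin (L : ℝ) :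
    Tendsto (fun N : ℕ => (N : ℝ) * (2 * Real.arcsin (L / (2 * N)))) atTop (𝓝 L) := by
  rcases eq_or_ne L 0 with rfl | hL
  · simp
  have hslope : Tendsto (fun y => y⁻¹ • (Real.arcsin (0 + y) - Real.arcsin 0)) (𝓝[≠] 0) (𝓝 1) := by
    simpa using (Real.hasDerivAt_arcsin (x := 0) (by norm_num) (by norm_num)).tendsto_slope_zero
  have hy : Tendsto (fun N : ℕ => L / (2 * N)) atTop (𝓝[≠] 0) := by
    refine tendsto_nhdsWithin_iff.2 ⟨?_, ?_⟩
    · simpa [div_div] using tendsto_const_div_atTop_nhds_zero_nat (L / 2)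
    · filter_upwards [eventually_gt_atTop 0] with N hN
      simp [hL, hN.ne']
  refine (by simpa using (hslope.comp hy).const_mul L : Tendsto _ _ (𝓝 L)).congr' ?_
  filter_upwards [eventually_gt_atTop 0] with N hN
  field_simp

-- Subdivide `[0, 1]` into `N` pieces: on each the chord is `≤ L / N`, so the angle
-- `2 arcsin (chord / 2)` is `≤ 2 arcsin (L / 2N)`; sum with the triangle inequality, let `N → ∞`.
theorem angle_le_of_norm_sub_le_mul {γ : ℝ → V} {L : ℝ} (hγ : ∀ t, ‖γ t‖ = 1)
    (hL : ∀ s t, ‖γ s - γ t‖ ≤ L * |s - t|) : angle (γ 0) (γ 1) ≤ L := by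
  have hsub : ∀ N : ℕ, 0 < N → ∀ m : ℕ,
      angle (γ 0) (γ (m / N)) ≤ m * (2 * Real.arcsin (L / (2 * N))) := by
    intro N hN m
    have hN' : (0 : ℝ) < N := Nat.cast_pos.2 hN
    induction m with
    | zero => simp [angle_self (norm_ne_zero_iff.1 ((hγ 0).symm ▸ one_ne_zero))]
    | succ m ih =>
      have hstep : angle (γ (m / N)) (γ ((m + 1 : ℕ) / N)) ≤ 2 * Real.arcsin (L / (2 * N)) := by
        have hchord := hL (m / N) ((m + 1 : ℕ) / N)
        rw [show |(m : ℝ) / N - (m + 1 : ℕ) / N| = 1 / N by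
          rw [abs_sub_comm]; push_cast; rw [← sub_div]; simp [abs_of_pos hN']] at hchord
        rw [angle_eq_two_mul_arcsin (hγ _) (hγ _)]
        have : ‖γ (m / N) - γ ((m + 1 : ℕ) / N)‖ / 2 ≤ L / (2 * N) := by
          rw [mul_one_div] at hchord
          rw [mul_comm, ← div_div]
          exact div_le_div_of_nonneg_right hchord zero_le_two
        linarith [Real.arcsin_le_arcsin this]
      calc angle (γ 0) (γ ((m + 1 : ℕ) / N))
          ≤ angle (γ 0) (γ (m / N)) + angle (γ (m / N)) (γ ((m + 1 : ℕ) / N)) :=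
            angle_le_angle_add_angle _ _ _
        _ ≤ m * (2 * Real.arcsin (L / (2 * N))) + 2 * Real.arcsin (L / (2 * N)) :=
            add_le_add ih hstep
        _ = (m + 1 : ℕ) * (2 * Real.arcsin (L / (2 * N))) := by push_cast; ring
  refine ge_of_tendsto (tendsto_nat_mul_two_mul_arcsin L) ?_
  filter_upwards [eventually_gt_atTop 0] with N hN
  simpa [div_self (Nat.cast_pos.2 hN : (0 : ℝ) < N).ne'] using hsub N hN N

end SphereCurves

section SkewAdjointExp

variable {𝔸 : Type*} [NormedRing 𝔸] [NormedAlgebra ℝ 𝔸] [CompleteSpace 𝔸]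

theorem hasDerivAt_exp_smul_mul_exp_one_sub_smul (A B : 𝔸) (t : ℝ) :
    HasDerivAt (fun s : ℝ => exp (s • A) * exp ((1 - s) • B))
      (exp (t • A) * (A - B) * exp ((1 - t) • B)) t := by
  have hB : HasDerivAt (fun s : ℝ => exp ((1 - s) • B)) (-(exp ((1 - t) • B) * B)) t := by
    simpa [Function.comp_def] using
      (hasDerivAt_exp_smul_const B (1 - t)).scomp t ((hasDerivAt_id t).const_sub 1)
  refine ((hasDerivAt_exp_smul_const A t).mul hB).congr_deriv ?_
  rw [(((Commute.refl B).smul_left (1 - t)).exp_left).eq]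
  noncomm_ring

variable {H : Type*} [NormedAddCommGroup H] [InnerProductSpace ℝ H] [CompleteSpace H]

theorem norm_exp_apply_of_mem_skewAdjoint {A : H →L[ℝ] H} (hA : A ∈ skewAdjoint (H →L[ℝ] H))
    (x : H) : ‖exp A x‖ = ‖x‖ := by
  have hu : exp A ∈ unitary (H →L[ℝ] H) := by
    let _ : NormedAlgebra ℚ (H →L[ℝ] H) := .restrictScalars ℚ ℝ _
    exact exp_mem_unitary_of_mem_skewAdjoint hA
  exact ContinuousLinearMap.norm_map_of_mem_unitary hu x

-- `e^A x - e^B x = ∫₀¹ e^{tA} (A - B) e^{(1-t)B} x dt`, and the integrand has norm at most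
-- `‖A - B‖ ‖x‖` because `e^{tA}` and `e^{(1-t)B}` are isometries.
theorem norm_exp_apply_sub_exp_apply_le {A B : H →L[ℝ] H} (hA : A ∈ skewAdjoint (H →L[ℝ] H))
    (hB : B ∈ skewAdjoint (H →L[ℝ] H)) (x : H) :
    ‖exp A x - exp B x‖ ≤ ‖A - B‖ * ‖x‖ := by
  have hderiv : ∀ t : ℝ, HasDerivAt (fun s : ℝ => (exp (s • A) * exp ((1 - s) • B)) x)
      ((exp (t • A) * (A - B) * exp ((1 - t) • B)) x) t := fun t => by
    simpa using (hasDerivAt_exp_smul_mul_exp_one_sub_smul A B t).clm_apply (hasDerivAt_const t x)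
  have hbound : ∀ t : ℝ, ‖(exp (t • A) * (A - B) * exp ((1 - t) • B)) x‖ ≤ ‖A - B‖ * ‖x‖ := by
    intro t
    rw [mul_apply_eq_comp, mul_apply_eq_comp,
      norm_exp_apply_of_mem_skewAdjoint (skewAdjoint.smul_mem t hA)]
    calc ‖(A - B) (exp ((1 - t) • B) x)‖ ≤ ‖A - B‖ * ‖exp ((1 - t) • B) x‖ :=
          (A - B).le_opNorm _
      _ = ‖A - B‖ * ‖x‖ := by rw [norm_exp_apply_of_mem_skewAdjoint (skewAdjoint.smul_mem _ hB)]
  have := norm_image_sub_le_of_norm_deriv_le_segment' (a := 0) (b := 1)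
    (fun t _ => (hderiv t).hasDerivWithinAt) (fun t _ => hbound t) 1 (by simp)
  simpa using this

theorem angle_exp_apply_le {A B : H →L[ℝ] H} (hA : A ∈ skewAdjoint (H →L[ℝ] H))
    (hB : B ∈ skewAdjoint (H →L[ℝ] H)) {x : H} (hx : ‖x‖ = 1) :
    angle (exp A x) (exp B x) ≤ ‖A - B‖ := by
  have hpath : ∀ t : ℝ, A + t • (B - A) ∈ skewAdjoint (H →L[ℝ] H) := fun t =>
    add_mem hA (skewAdjoint.smul_mem t (sub_mem hB hA))
  have := angle_le_of_norm_sub_le_mul (γ := fun t => exp (A + t • (B - A)) x) (L := ‖B - A‖)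
    (fun t => by rw [norm_exp_apply_of_mem_skewAdjoint (hpath t), hx]) fun s t => by
      refine (norm_exp_apply_sub_exp_apply_le (hpath s) (hpath t) x).trans_eq ?_
      rw [hx, mul_one, add_sub_add_left_eq_sub, ← sub_smul, norm_smul, Real.norm_eq_abs, mul_comm]
  simpa [norm_sub_rev] using this

end SkewAdjointExp

theorem EuclideanSpace.norm_le_sqrt_card_mul_of_abs_le {ι : Type*} [Fintype ι]
    {x : EuclideanSpace ℝ ι} {c : ℝ} (hc : 0 ≤ c) (h : ∀ i, |x i| ≤ c) :
    ‖x‖ ≤ √(Fintype.card ι) * c := by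
  calc ‖x‖ = √(∑ i, ‖x i‖ ^ 2) := EuclideanSpace.norm_eq x
    _ ≤ √(∑ _ : ι, c ^ 2) := by
        gcongr with i
        rw [Real.norm_eq_abs]
        exact h i
    _ = √(Fintype.card ι) * c := by
        rw [Finset.sum_const, Finset.card_univ, nsmul_eq_mul, Real.sqrt_mul (Nat.cast_nonneg _),
          Real.sqrt_sq hc]

theorem dot3_eq_inner (u w : Fin 3 → ℝ) : dot3 u w = inner ℝ (toLp 2 u) (toLp 2 w) := by
  simp [dot3, EuclideanSpace.inner_toLp_toLp, dotProduct, mul_comm]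

theorem norm3_eq_norm (u : Fin 3 → ℝ) : norm3 u = ‖toLp 2 u‖ := by
  rw [norm3, dot3_eq_inner, real_inner_self_eq_norm_sq, Real.sqrt_sq (norm_nonneg _)]

theorem vangle_eq_angle (u w : Fin 3 → ℝ) : vangle u w = angle (toLp 2 u) (toLp 2 w) := by
  rw [vangle, angle, dot3_eq_inner, norm3_eq_norm, norm3_eq_norm]

theorem abs_vangle_sub_le_add {x u u' : Fin 3 → ℝ} {θ ε μ : ℝ} (hu : vangle u u' ≤ μ)
    (h : |vangle x u - θ| ≤ ε) : |vangle x u' - θ| ≤ ε + μ := by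
  rw [vangle_eq_angle] at hu h ⊢
  have := abs_angle_sub_angle_le (toLp 2 x) (toLp 2 u) (toLp 2 u')
  linarith [abs_sub_le (angle (toLp 2 x) (toLp 2 u')) (angle (toLp 2 x) (toLp 2 u)) θ]

theorem crossMat_mulVec (a w : Fin 3 → ℝ) : crossMat a *ᵥ w = a ⨯₃ w := by
  ext i
  fin_cases i <;> simp [crossMat, cross_apply, mulVec, dotProduct, Fin.sum_univ_three] <;> ring

theorem crossMat_sub (a b : Fin 3 → ℝ) : crossMat (a - b) = crossMat a - crossMat b := by
  ext i j
  fin_cases i <;> fin_cases j <;> simp [crossMat] <;> ring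

theorem crossMat_transpose (a : Fin 3 → ℝ) : (crossMat a)ᵀ = -crossMat a := by
  ext i j
  fin_cases i <;> fin_cases j <;> simp [crossMat]

theorem norm_toLp_cross_le (a w : Fin 3 → ℝ) : ‖toLp 2 (a ⨯₃ w)‖ ≤ ‖toLp 2 a‖ * ‖toLp 2 w‖ := by
  have hsq : ∀ u : Fin 3 → ℝ, ‖toLp 2 u‖ ^ 2 = u ⬝ᵥ u := fun u => by
    rw [← real_inner_self_eq_norm_sq, EuclideanSpace.inner_toLp_toLp, star_trivial]
  refine pow_le_pow_iff_left₀ (norm_nonneg _) (by positivity) two_ne_zero |>.1 ?_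
  rw [mul_pow, hsq, hsq, hsq, cross_dot_cross, dotProduct_comm w a]
  nlinarith [sq_nonneg (a ⬝ᵥ w)]

theorem toEuclideanCLM_crossMat_mem_skewAdjoint (a : Fin 3 → ℝ) :
    toEuclideanCLM (𝕜 := ℝ) (crossMat a) ∈ skewAdjoint (EuclideanSpace ℝ (Fin 3) →L[ℝ] _) := by
  rw [skewAdjoint.mem_iff, ← map_star, star_eq_conjTranspose, conjTranspose_eq_transpose_of_trivial,
    crossMat_transpose, map_neg]

theorem norm_toEuclideanCLM_crossMat_le (a : Fin 3 → ℝ) :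
    ‖toEuclideanCLM (𝕜 := ℝ) (crossMat a)‖ ≤ ‖toLp 2 a‖ :=
  ContinuousLinearMap.opNorm_le_bound _ (norm_nonneg _) fun y => by
    have := norm_toLp_cross_le a (ofLp y)
    rwa [← crossMat_mulVec, ← toEuclideanCLM_toLp, toLp_ofLp] at this

theorem toLp_axisAngleRot_mulVec (a v : Fin 3 → ℝ) :
    toLp 2 (axisAngleRot a *ᵥ v) = exp (toEuclideanCLM (𝕜 := ℝ) (crossMat a)) (toLp 2 v) := by
  -- `map_exp` is stated for Banach algebras; any algebra norm on matrices will do.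
  let _ : NormedRing (Matrix (Fin 3) (Fin 3) ℝ) := Matrix.linftyOpNormedRing
  let _ : NormedAlgebra ℝ (Matrix (Fin 3) (Fin 3) ℝ) := Matrix.linftyOpNormedAlgebra
  let _ : NormedAlgebra ℚ (Matrix (Fin 3) (Fin 3) ℝ) := .restrictScalars ℚ ℝ _
  have : CompleteSpace (Matrix (Fin 3) (Fin 3) ℝ) := FiniteDimensional.complete ℝ _
  have hcont : Continuous (toEuclideanCLM (n := Fin 3) (𝕜 := ℝ)) :=
    LinearMap.continuous_of_finiteDimensional
      (toEuclideanCLM (n := Fin 3) (𝕜 := ℝ)).toAlgEquiv.toLinearMap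
  rw [← NormedSpace.map_exp (toEuclideanCLM (n := Fin 3) (𝕜 := ℝ)) hcont]
  rfl

theorem vangle_axisAngleRot_mulVec_le (a b : Fin 3 → ℝ) {v : Fin 3 → ℝ} (hv : norm3 v = 1) :
    vangle (axisAngleRot a *ᵥ v) (axisAngleRot b *ᵥ v) ≤ norm3 (a - b) := by
  rw [norm3_eq_norm] at hv ⊢
  rw [vangle_eq_angle, toLp_axisAngleRot_mulVec, toLp_axisAngleRot_mulVec]
  refine (angle_exp_apply_le (toEuclideanCLM_crossMat_mem_skewAdjoint a)
    (toEuclideanCLM_crossMat_mem_skewAdjoint b) hv).trans ?_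
  rw [← map_sub, ← crossMat_sub]
  exact norm_toEuclideanCLM_crossMat_le _

theorem inlierCount_le_of_imp {J K : ℕ} (n : Fin J → Fin 3 → ℝ) (v : Fin K → Fin 3 → ℝ)
    {R R' : Matrix (Fin 3) (Fin 3) ℝ} {ε ε' : ℝ}
    (h : ∀ j k, |vangle (n j) (R *ᵥ v k) - Real.pi / 2| ≤ ε →
      |vangle (n j) (R' *ᵥ v k) - Real.pi / 2| ≤ ε') :
    inlierCount n v R ε ≤ inlierCount n v R' ε' :=
  Finset.sum_le_sum fun j _ => Finset.sup_mono_fun fun k _ => by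
    split_ifs with h₁ h₂ <;> first | exact le_rfl | exact zero_le_one | exact absurd (h j k h₁) h₂

theorem bnb_upper_bound_general {J K : ℕ} (n : Fin J → Fin 3 → ℝ) (v : Fin K → Fin 3 → ℝ)
    (hv : ∀ k, norm3 (v k) = 1)
    (ε δ μ : ℝ) (hμ : μ = min (Real.sqrt 3 * δ / 2) Real.pi)
    (r₀ : Fin 3 → ℝ) :
    (∀ (r : Fin 3 → ℝ) (j : Fin J) (k : Fin K),
        vangle ((axisAngleRot r).mulVec (v k)) ((axisAngleRot r₀).mulVec (v k)) ≤ μ →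
        |vangle (n j) ((axisAngleRot r).mulVec (v k)) - Real.pi / 2| ≤ ε →
        |vangle (n j) ((axisAngleRot r₀).mulVec (v k)) - Real.pi / 2| ≤ ε + μ) ∧
    (∀ r : Fin 3 → ℝ, (∀ i, |r i - r₀ i| ≤ δ / 2) →
        inlierCount n v (axisAngleRot r) ε ≤ inlierCount n v (axisAngleRot r₀) (ε + μ)) := by
  refine ⟨fun r j k => abs_vangle_sub_le_add, fun r hr =>
    inlierCount_le_of_imp n v fun j k => abs_vangle_sub_le_add ?_⟩
  have hcube : norm3 (r - r₀) ≤ √3 * (δ / 2) := by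
    rw [norm3_eq_norm]
    simpa using EuclideanSpace.norm_le_sqrt_card_mul_of_abs_le (x := toLp 2 (r - r₀))
      ((abs_nonneg _).trans (hr 0)) (by simpa using hr)
  rw [hμ]
  refine le_min ?_ (Real.arccos_le_pi _)
  calc vangle (axisAngleRot r *ᵥ v k) (axisAngleRot r₀ *ᵥ v k) ≤ norm3 (r - r₀) :=
        vangle_axisAngleRot_mulVec_le r r₀ (hv k)
    _ ≤ √3 * δ / 2 := by linarith

/-- Pointwise relaxation and validity of the BnB upper bound: for every r in the
rotation cube of side δ centered at r₀, with μ = min(√3·δ/2, π),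
(i) if ∠(R_r v_k, R_{r₀} v_k) ≤ μ and |∠(n_j, R_r v_k) − π/2| ≤ ε then
|∠(n_j, R_{r₀} v_k) − π/2| ≤ ε + μ, and (ii) E_U(r₀) ≥ E(R_r). -/
theorem bnb_upper_bound {J K : ℕ} (n : Fin J → Fin 3 → ℝ) (v : Fin K → Fin 3 → ℝ)
    (hn : ∀ j, norm3 (n j) = 1) (hv : ∀ k, norm3 (v k) = 1)
    (ε δ μ : ℝ) (hε : 0 ≤ ε) (hμ : μ = min (Real.sqrt 3 * δ / 2) Real.pi)
    (r₀ : Fin 3 → ℝ) :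
    (∀ (r : Fin 3 → ℝ) (j : Fin J) (k : Fin K),
        vangle ((axisAngleRot r).mulVec (v k)) ((axisAngleRot r₀).mulVec (v k)) ≤ μ →
        |vangle (n j) ((axisAngleRot r).mulVec (v k)) - Real.pi / 2| ≤ ε →
        |vangle (n j) ((axisAngleRot r₀).mulVec (v k)) - Real.pi / 2| ≤ ε + μ) ∧
    (∀ r : Fin 3 → ℝ, (∀ i, |r i - r₀ i| ≤ δ / 2) →
        inlierCount n v (axisAngleRot r) ε ≤ inlierCount n v (axisAngleRot r₀) (ε + μ)) :=
  bnb_upper_bound_general n v hv ε δ μ hμ r₀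
end

section
/- The matrix J = (sin θ/θ)·I + (1 − sin θ/θ)·b bᵀ + ((1 − cos θ)/θ)·b̂ is invertible for all θ ∈ (0, 2π) and unit vectors b. -/
open Matrix

/-- The left Jacobian J is invertible for θ ∈ (0, 2π). -/
theorem left_jacobian_invertible (b : Fin 3 → ℝ) (θ : ℝ) (hb : norm3 b = 1)
    (hθ : θ ∈ Set.Ioo 0 (2 * Real.pi)) :
    IsUnit ((Real.sin θ / θ) • (1 : Matrix (Fin 3) (Fin 3) ℝ) +
      (1 - Real.sin θ / θ) • vecMulVec b b +
      ((1 - Real.cos θ) / θ) • crossMat b) := by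
  obtain ⟨hθ0, hθ2⟩ := hθ
  have hθne : θ ≠ 0 := ne_of_gt hθ0
  -- unit vector
  have hbb : b 0 ^ 2 + b 1 ^ 2 + b 2 ^ 2 = 1 := by
    have h1 : dot3 b b = 1 := by
      have hnn : 0 ≤ dot3 b b := by
        simp [dot3, Fin.sum_univ_three]
        nlinarith [sq_nonneg (b 0), sq_nonneg (b 1), sq_nonneg (b 2)]
      have := hb
      rw [norm3] at this
      nlinarith [Real.sq_sqrt hnn, this]
    simpa [dot3, Fin.sum_univ_three, sq] using h1
  -- 1 - cos θ > 0
  have hcos : Real.cos θ < 1 := by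
    refine lt_of_le_of_ne (Real.cos_le_one θ) fun h => hθne ?_
    exact (Real.cos_eq_one_iff_of_lt_of_lt (by linarith [Real.pi_pos]) hθ2).mp h
  rw [Matrix.isUnit_iff_isUnit_det, isUnit_iff_ne_zero]
  have hdet : ((Real.sin θ / θ) • (1 : Matrix (Fin 3) (Fin 3) ℝ) +
      (1 - Real.sin θ / θ) • vecMulVec b b +
      ((1 - Real.cos θ) / θ) • crossMat b).det
      = (Real.sin θ ^ 2 + (1 - Real.cos θ) ^ 2) / θ ^ 2 := by
    rw [Matrix.det_fin_three]
    simp [vecMulVec, crossMat, Matrix.one_apply, Matrix.of_apply]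
    linear_combination (Real.sin θ / θ * ((1 - Real.cos θ) / θ) ^ 2 +
      (1 - Real.sin θ / θ) * (Real.sin θ / θ) ^ 2 +
      (1 - Real.sin θ / θ) * ((1 - Real.cos θ) / θ) ^ 2 *
        (b 0 ^ 2 + b 1 ^ 2 + b 2 ^ 2 + 1)) * hbb
  rw [hdet]
  have hnum : 0 < Real.sin θ ^ 2 + (1 - Real.cos θ) ^ 2 := by
    have h1 : 0 < (1 - Real.cos θ) ^ 2 := pow_pos (by linarith) 2
    nlinarith [sq_nonneg (Real.sin θ)]
  exact (div_pos hnum (pow_pos hθ0 2)).ne'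
end
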